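/- arXiv:2602.16427 — 4 statements merged into one kernel-verified Lean document; each statement's English description precedes it below -/
import Mathlib

section
/- The binary-search learner in the natural-number guessing game, defined by states C = ℕ ⊎ (ℕ × ℕ) (where inl n represents the half-open interval [n, ∞) and inr (n, m) the closed interval [n, m]), initial state q₀ = inl 0, and strategy c(inl n) = (2·n + 1, too-low ↦ inl (2·n + 2), too-high ↦ inr (n, 2·n)) and c(inr (n, m)) = (⌊(n+m)/2⌋, too-low ↦ inr (min m (⌊(n+m)/2⌋ + 1), m), too-high ↦ inr (n, max n (⌊(n+m)/2⌋ − 1))) (with truncated subtraction), finds every secret d ∈ ℕ within 3 + 2·⌊log₂ d⌋ rounds against every teacher, where ⌊log₂ d⌋ denotes Nat.log 2 d (so ⌊log₂ 0⌋ = 0). -/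
/-- The two possible wrong-guess answers of the teacher. -/
inductive W : Type
  | tooHigh : W
  | tooLow : W
  deriving DecidableEq

/-- An answer `w` is consistent with a secret `d` for a guess `H`. -/
def Consistent (w : W) (H d : ℕ) : Prop :=
  (w = W.tooLow ∧ H < d) ∨ (w = W.tooHigh ∧ H > d)

/-- The secret `d` is still possible after `n` rounds from the state pair `(q, s)`. -/
def StillPossible {C T : Type} (c : C → ℕ × (W → C)) (δ : T × ℕ → Option (W × T))
    (d : ℕ) : ℕ → C × T → Prop
  | 0, _ => True
  | n + 1, (q, s) =>
      ∃ (w : W) (s' : T),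
        δ (s, (c q).1) = some (w, s') ∧
        Consistent w (c q).1 d ∧
        StillPossible c δ d n ((c q).2 w, s')

/-- The state space of the binary-search learner:
`Sum.inl n` represents the half-open interval `[n, ∞)`,
`Sum.inr (n, m)` represents the closed interval `[n, m]`. -/
abbrev BisectState : Type := ℕ ⊕ ℕ × ℕ

/-- The strategy of the binary-search learner. -/
def bisect : BisectState → ℕ × (W → BisectState)
  | Sum.inl n =>
      (2 * n + 1, fun w =>
        match w with
        | W.tooLow => Sum.inl (2 * n + 2)
        | W.tooHigh => Sum.inr (n, 2 * n))
  | Sum.inr (n, m) =>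
      ((n + m) / 2, fun w =>
        match w with
        | W.tooLow => Sum.inr (min m ((n + m) / 2 + 1), m)
        | W.tooHigh => Sum.inr (n, max n ((n + m) / 2 - 1)))

/-!
In state `inl (2^(j+1) - 2)` the learner guesses `2^(j+2) - 3`; while the answer is too-low it
moves on to `inl (2^(j+2) - 2)`, so this doubling phase keeps `2^(j+1) - 2 ≤ d` and hence
`j ≤ ⌊log₂ d⌋`. The first too-high answer traps `d` in the interval `[2^(j+1) - 2, 2^(j+2) - 4]`
of fewer than `2^(j+1)` elements, which bisection closes in `j + 2` rounds. Altogether at most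
`(j + 1) + (j + 2) ≤ 3 + 2 ⌊log₂ d⌋` rounds are played.
-/

theorem consistent_tooLow_iff {H d : ℕ} : Consistent W.tooLow H d ↔ H < d := by
  simp [Consistent]

theorem consistent_tooHigh_iff {H d : ℕ} : Consistent W.tooHigh H d ↔ d < H := by
  simp [Consistent]

namespace StillPossible

variable {C T : Type} {c : C → ℕ × (W → C)} {δ : T × ℕ → Option (W × T)} {d : ℕ}

theorem of_succ : ∀ {n : ℕ} {p : C × T},
    StillPossible c δ d (n + 1) p → StillPossible c δ d n p
  | 0, _, _ => trivial
  | _ + 1, _, ⟨w, s', hδ, hw, h⟩ => ⟨w, s', hδ, hw, of_succ h⟩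

theorem mono {k n : ℕ} (hkn : k ≤ n) {p : C × T} (h : StillPossible c δ d n p) :
    StillPossible c δ d k p := by
  induction hkn with
  | refl => exact h
  | step _ ih => exact ih h.of_succ

end StillPossible

theorem not_stillPossible_succ {C T : Type} {c : C → ℕ × (W → C)} {δ : T × ℕ → Option (W × T)}
    {d n : ℕ} {q : C} {s : T}
    (h : ∀ w, Consistent w (c q).1 d → ∀ s', ¬ StillPossible c δ d n ((c q).2 w, s')) :
    ¬ StillPossible c δ d (n + 1) (q, s) :=
  fun ⟨w, s', _, hw, hn⟩ => h w hw s' hn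

section Bisect

variable {T : Type} {δ : T × ℕ → Option (W × T)} {d : ℕ}

theorem not_stillPossible_bisect_inr (k n m : ℕ) (s : T) (hnd : n ≤ d) (hdm : d ≤ m)
    (hmn : m < n + 2 ^ k) : ¬ StillPossible bisect δ d (k + 1) (Sum.inr (n, m), s) := by
  induction k generalizing n m s with
  | zero =>
    refine not_stillPossible_succ fun w hw s' => ?_
    cases w <;> simp only [bisect, consistent_tooLow_iff, consistent_tooHigh_iff] at hw <;> omega
  | succ k ih =>
    have hpow : 2 ^ (k + 1) = 2 * 2 ^ k := pow_succ' 2 k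
    refine not_stillPossible_succ fun w hw s' => ?_
    cases w
    · simp only [bisect, consistent_tooHigh_iff] at hw ⊢
      exact ih n _ s' hnd (by omega) (by omega)
    · simp only [bisect, consistent_tooLow_iff] at hw ⊢
      exact ih _ m s' (by omega) hdm (by omega)

theorem not_stillPossible_bisect_inl (k j : ℕ) (s : T) (hjd : 2 ^ (j + 1) - 2 ≤ d)
    (hdj : d < 2 ^ (j + 1 + k)) :
    ¬ StillPossible bisect δ d (2 * k + j + 3) (Sum.inl (2 ^ (j + 1) - 2), s) := by
  have hpow : 2 ^ (j + 1 + 1) = 2 * 2 ^ (j + 1) := pow_succ' 2 (j + 1)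
  have htwo : 2 ≤ 2 ^ (j + 1) := Nat.le_self_pow j.succ_ne_zero 2
  refine not_stillPossible_succ fun w hw s' => ?_
  cases w
  · simp only [bisect, consistent_tooHigh_iff] at hw ⊢
    exact mt (StillPossible.mono (by omega))
      (not_stillPossible_bisect_inr (j + 1) (2 ^ (j + 1) - 2) (2 * (2 ^ (j + 1) - 2)) s' hjd
        (by omega) (by omega))
  · simp only [bisect, consistent_tooLow_iff] at hw ⊢
    cases k with
    | zero => rw [Nat.add_zero] at hdj; omega
    | succ k =>
      rw [show 2 * (2 ^ (j + 1) - 2) + 2 = 2 ^ (j + 1 + 1) - 2 by omega,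
        show 2 * (k + 1) + j + 2 = 2 * k + (j + 1) + 3 by ring]
      exact not_stillPossible_bisect_inl k (j + 1) s' (by omega)
        (by rwa [Nat.add_right_comm _ 1 k])

end Bisect

/-- The binary-search learner finds every secret `d` within
`3 + 2 * ⌊log₂ d⌋` rounds against every teacher. -/
theorem bisect_learner_bound
    {T : Type} (s₀ : T) (δ : T × ℕ → Option (W × T)) (d : ℕ) :
    ¬ StillPossible bisect δ d (3 + 2 * Nat.log 2 d) (Sum.inl 0, s₀) := by
  rw [add_comm 3]
  exact not_stillPossible_bisect_inl (Nat.log 2 d) 0 s₀ (Nat.zero_le d)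
    (by rw [Nat.zero_add, Nat.add_comm]; exact Nat.lt_pow_succ_log_self Nat.one_lt_two d)
end

section
/- Let n, m ∈ ℕ and consider the adversarial teacher in the natural-number guessing game with state space T = {(a, b) ∈ ℕ × ℕ | a ≤ b} (representing nonempty intervals [a, b]), initial state (n, n + m), and transition δ((a, b), k) = none (i.e. 'correct') if a = k and k = b; δ((a, b), k) = some (too-low, (max (k+1) a, b)) if k ≤ ⌊(a+b)/2⌋ and not (a = k = b); and δ((a, b), k) = some (too-high, (a, min (k−1) b)) if k > ⌊(a+b)/2⌋. Then for every learner there exists a natural number d ∈ ℕ such that d is still possible after ⌊log₂ m⌋ rounds, where ⌊log₂ m⌋ denotes Nat.log 2 m. -/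
/-- The state space of the adversarial teacher: nonempty intervals `[a, b]`. -/
abbrev AdvState : Type := {p : ℕ × ℕ // p.1 ≤ p.2}

/-- The transition function of the adversarial teacher, splitting its
interval in half after each query. -/
def advδ : AdvState × ℕ → Option (W × AdvState)
  | (⟨(a, b), hab⟩, k) =>
      if h1 : a = k ∧ k = b then none
      else if h2 : k ≤ (a + b) / 2 then
        some (W.tooLow, ⟨(max (k + 1) a, b), by show max (k + 1) a ≤ b; omega⟩)
      else
        some (W.tooHigh, ⟨(a, min (k - 1) b), by show a ≤ min (k - 1) b; omega⟩)

lemma advδ_low (a b k : ℕ) (hab : a ≤ b) (h1 : ¬(a = k ∧ k = b)) (h2 : k ≤ (a + b) / 2)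
    (hb : max (k + 1) a ≤ b) :
    advδ (⟨(a, b), hab⟩, k) = some (W.tooLow, ⟨(max (k + 1) a, b), hb⟩) := by
  show (if h1 : a = k ∧ k = b then none
      else if h2 : k ≤ (a + b) / 2 then
        some (W.tooLow, (⟨(max (k + 1) a, b), by show max (k + 1) a ≤ b; omega⟩ : AdvState))
      else
        some (W.tooHigh, ⟨(a, min (k - 1) b), by show a ≤ min (k - 1) b; omega⟩)) = _
  rw [dif_neg h1, dif_pos h2]

lemma advδ_high (a b k : ℕ) (hab : a ≤ b) (h1 : ¬(a = k ∧ k = b)) (h2 : ¬(k ≤ (a + b) / 2))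
    (hb : a ≤ min (k - 1) b) :
    advδ (⟨(a, b), hab⟩, k) = some (W.tooHigh, ⟨(a, min (k - 1) b), hb⟩) := by
  show (if h1 : a = k ∧ k = b then none
      else if h2 : k ≤ (a + b) / 2 then
        some (W.tooLow, (⟨(max (k + 1) a, b), by show max (k + 1) a ≤ b; omega⟩ : AdvState))
      else
        some (W.tooHigh, ⟨(a, min (k - 1) b), by show a ≤ min (k - 1) b; omega⟩)) = _
  rw [dif_neg h1, dif_neg h2]

lemma adv_key {C : Type} (c : C → ℕ × (W → C)) :
    ∀ (r a b : ℕ) (hab : a ≤ b), 2 ^ r ≤ b - a + 1 → ∀ q : C,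
      ∃ d, a ≤ d ∧ d ≤ b ∧ StillPossible c advδ d r (q, ⟨(a, b), hab⟩) := by
  intro r
  induction r with
  | zero => exact fun a b hab _ q => ⟨a, le_refl a, hab, trivial⟩
  | succ r ih =>
    intro a b hab h q
    have hp : 2 ^ r + 2 ^ r ≤ b - a + 1 := by rw [pow_succ] at h; omega
    have hpos : 1 ≤ 2 ^ r := Nat.one_le_two_pow
    set k := (c q).1 with hk
    by_cases h2 : k ≤ (a + b) / 2
    · have hab' : max (k + 1) a ≤ b := by omega
      obtain ⟨d, hd1, hd2, hd3⟩ := ih (max (k + 1) a) b hab' (by omega) ((c q).2 W.tooLow)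
      have hkd : k < d := by
        have := le_trans (le_max_left (k + 1) a) hd1; omega
      have had : a ≤ d := le_trans (le_max_right (k + 1) a) hd1
      exact ⟨d, had, hd2, W.tooLow, _, advδ_low a b k hab (by omega) h2 hab',
        Or.inl ⟨rfl, hkd⟩, hd3⟩
    · have hab' : a ≤ min (k - 1) b := by omega
      obtain ⟨d, hd1, hd2, hd3⟩ := ih a (min (k - 1) b) hab' (by omega) ((c q).2 W.tooHigh)
      have hdb : d ≤ b := le_trans hd2 (min_le_right _ _)
      have hkd : d < k := by
        have := le_trans hd2 (min_le_left (k - 1) b); omega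
      exact ⟨d, hd1, hdb, W.tooHigh, _, advδ_high a b k hab (by omega) h2 hab',
        Or.inr ⟨rfl, hkd⟩, hd3⟩

/-- Lower bound: against the adversarial teacher initialized with the interval
`[n, n + m]`, for every learner there is a natural number `d` that is still
possible after `⌊log₂ m⌋` rounds. -/
theorem adversarial_teacher_lower_bound
    (n m : ℕ)
    {C : Type} (q₀ : C) (c : C → ℕ × (W → C)) :
    ∃ d : ℕ,
      StillPossible c advδ d (Nat.log 2 m) (q₀, ⟨(n, n + m), by omega⟩) := by
  have h : 2 ^ Nat.log 2 m ≤ (n + m) - n + 1 := by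
    rcases Nat.eq_zero_or_pos m with hm | hm
    · simp [hm]
    · have := Nat.pow_log_le_self 2 (by omega : m ≠ 0)
      omega
  obtain ⟨d, _, _, hd⟩ := adv_key c (Nat.log 2 m) n (n + m) (by omega) h q₀
  exact ⟨d, hd⟩
end

section
/- Fix any stateless teacher in the natural-number guessing game, i.e. a teacher with state set T = Unit, given by a map δ : ℕ → Option W, and assume there is at least one query k ∈ ℕ with δ(k) ≠ some too-low (the teacher answers 'correct' or 'too-high' to k). Then there exists a learner that finds every secret d ∈ ℕ within 2 rounds against this teacher. -/
/-- Against any fixed stateless teacher that gives at least one answer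
different from `too-low`, there is a learner that finds every secret within
`2` rounds. -/
theorem stateless_teacher_find_within_two_rounds
    (δ : ℕ → Option W) (h : ∃ k : ℕ, δ k ≠ some W.tooLow) :
    ∃ (C : Type) (q₀ : C) (c : C → ℕ × (W → C)),
      ∀ d : ℕ,
        ¬ StillPossible c
            (fun p : Unit × ℕ => (δ p.2).map (fun w => (w, ())))
            d 2 (q₀, ()) := by
  classical
  let k := Nat.find h
  have hk : δ k ≠ some W.tooLow := Nat.find_spec h
  have hmin : ∀ j < k, δ j = some W.tooLow := by
    intro j hj
    have := Nat.find_min h hj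
    simpa using this
  refine ⟨Bool, true, fun b => (if b then k else k - 1, fun _ => false), ?_⟩
  intro d hsp
  obtain ⟨w, s', heq, hcons, w2, s2, heq2, hcons2, -⟩ := hsp
  simp only [Option.map_eq_some_iff] at heq heq2
  obtain ⟨w', hw', hw'eq⟩ := heq
  obtain ⟨w2', hw2', hw2'eq⟩ := heq2
  obtain ⟨rfl, -⟩ := Prod.mk.inj hw'eq
  obtain ⟨rfl, -⟩ := Prod.mk.inj hw2'eq
  simp only [if_pos, if_true, Bool.false_eq_true, if_false] at hw' hcons hw2' hcons2
  cases w' with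
  | tooLow => exact hk hw'
  | tooHigh =>
    have hdk : d < k := by
      rcases hcons with ⟨h1, _⟩ | ⟨_, h2⟩
      · exact absurd h1 (by simp)
      · exact h2
    have hk0 : 0 < k := Nat.lt_of_le_of_lt (Nat.zero_le d) hdk
    have : δ (k - 1) = some W.tooLow := hmin _ (Nat.sub_lt hk0 one_pos)
    rw [this] at hw2'
    cases hw2'
    rcases hcons2 with ⟨_, h1⟩ | ⟨h2, _⟩
    · omega
    · exact absurd h2 (by simp)
end

section
/- Fix an alphabet A, let 𝔻 := Σ n, DFA A (Fin n) be the type of DFAs over A, and let T be a type. Let F and M_T be the functors from the product category (Type u) × (Type u) to Type u given on objects by F(R, X) = (List A × (Bool → X)) ⊕ (𝔻 × R × (List A → X)) and M_T(R, X) = T → (R ⊕ X × T) (with the evident action on morphisms). Then there is a bijection between natural transformations α : F ⟶ M_T and pairs of functions (MQᵀ : T × List A → Bool × T, EQᵀ : T × 𝔻 → Option (List A × T)). -/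
open CategoryTheory

/-- The type of DFAs over the alphabet `A`, with state type `Fin n` for some `n`. -/
abbrev DFAs (A : Type) : Type := Σ n : ℕ, DFA A (Fin n)

/-- The game type of DFA learning:
`F (R, X) = (List A × (Bool → X)) ⊕ (𝔻 × R × (List A → X))`,
where the left summand encodes membership queries and the right summand
encodes equivalence queries. -/
def FDFA (A : Type) : Type × Type ⥤ Type where
  obj P := (List A × (Bool → P.2)) ⊕ (DFAs A × P.1 × (List A → P.2))
  map f :=
    TypeCat.ofHom (Sum.map
      (fun x => (x.1, fun b => f.2 (x.2 b)))
      (fun x => (x.1, f.1 x.2.1, fun w => f.2 (x.2.2 w))))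
  map_id := by
    intro P
    ext x
    cases x <;> rfl
  map_comp := by
    intro P Q S f g
    ext x
    cases x <;> rfl

/-- The teacher functor `M_T (R, X) = T → (R ⊕ X × T)`. -/
def MGame (T : Type) : Type × Type ⥤ Type where
  obj P := T → (P.1 ⊕ P.2 × T)
  map f := TypeCat.ofHom (fun g t => Sum.map f.1 (Prod.map f.2 id) (g t))
  map_id := by
    intro P
    ext g t
    dsimp
    cases g t <;> rfl
  map_comp := by
    intro P Q S f g
    ext h t
    dsimp
    cases h t <;> rfl

/-!
Each summand of `FDFA A` is a coproduct of corepresentable functors: `List A × (Bool → X)` is a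
`List A`-indexed coproduct of `Hom ((Empty, Bool), (R, X))`, and `DFAs A × R × (List A → X)` a
`DFAs A`-indexed one of `Hom ((Unit, List A), (R, X))`. By the Yoneda lemma, `α : FDFA A ⟶ MGame T`
is thus freely determined by its values on the generic elements `inl (w, id)` and `inr (d, (), id)`,
that is, by a `List A`-indexed family in `MGame T (Empty, Bool) ≃ (T → Bool × T)` and a
`DFAs A`-indexed family in `MGame T (Unit, List A) ≃ (T → Option (List A × T))`.
-/

namespace DFATeacher

variable {A T : Type}

def ofQueries (memQ : T × List A → Bool × T) (eqQ : T × DFAs A → Option (List A × T)) :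
    FDFA A ⟶ MGame T where
  app P := TypeCat.ofHom fun x t =>
    match x with
    | .inl (w, k) => .inr (Prod.map k id (memQ (t, w)))
    | .inr (d, r, c) => (eqQ (t, d)).elim (.inl r) fun (w, t') => .inr (c w, t')
  naturality := by
    intro P Q f
    ext (⟨w, k⟩ | ⟨d, r, c⟩)
    · rfl
    · funext t
      change (eqQ (t, d)).elim _ _ = Sum.map _ _ ((eqQ (t, d)).elim _ _)
      cases eqQ (t, d) <;> rfl

def membershipQuery (α : FDFA A ⟶ MGame T) (q : T × List A) : Bool × T :=
  (α.app (Empty, Bool) (.inl (q.2, id)) q.1).elim Empty.elim id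

def equivalenceQuery (α : FDFA A ⟶ MGame T) (q : T × DFAs A) : Option (List A × T) :=
  (α.app (Unit, List A) (.inr (q.2, (), id)) q.1).elim (fun _ => none) some

theorem app_inl (α : FDFA A ⟶ MGame T) (P : Type × Type) (w : List A) (k : Bool → P.2) (t : T) :
    α.app P (.inl (w, k)) t = .inr (Prod.map k id (membershipQuery α (t, w))) := by
  have h := congrFun (NatTrans.naturality_apply α
    (show ((Empty, Bool) : Type × Type) ⟶ P from (TypeCat.ofHom Empty.elim, TypeCat.ofHom k))
    (.inl (w, id))) t
  change α.app P (.inl (w, k)) t = Sum.map _ _ _ at h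
  rw [h, membershipQuery]
  rcases α.app (Empty, Bool) (.inl (w, id)) t with e | _
  · exact e.elim
  · rfl

theorem app_inr (α : FDFA A ⟶ MGame T) (P : Type × Type) (d : DFAs A) (r : P.1)
    (c : List A → P.2) (t : T) :
    α.app P (.inr (d, r, c)) t =
      (equivalenceQuery α (t, d)).elim (.inl r) fun (w, t') => .inr (c w, t') := by
  have h := congrFun (NatTrans.naturality_apply α
    (show ((Unit, List A) : Type × Type) ⟶ P from (TypeCat.ofHom fun _ => r, TypeCat.ofHom c))
    (.inr (d, (), id))) t
  change α.app P (.inr (d, r, c)) t = Sum.map _ _ _ at h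
  rw [h, equivalenceQuery]
  cases α.app (Unit, List A) (.inr (d, (), id)) t <;> rfl

theorem membershipQuery_ofQueries (memQ : T × List A → Bool × T)
    (eqQ : T × DFAs A → Option (List A × T)) :
    membershipQuery (ofQueries memQ eqQ) = memQ :=
  rfl

theorem equivalenceQuery_ofQueries (memQ : T × List A → Bool × T)
    (eqQ : T × DFAs A → Option (List A × T)) :
    equivalenceQuery (ofQueries memQ eqQ) = eqQ := by
  funext q
  change Sum.elim _ _ (Option.elim (eqQ q) _ _) = _
  cases eqQ q <;> rfl

def equivQueries :
    (FDFA A ⟶ MGame T) ≃ (T × List A → Bool × T) × (T × DFAs A → Option (List A × T)) where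
  toFun α := (membershipQuery α, equivalenceQuery α)
  invFun q := ofQueries q.1 q.2
  left_inv α := by
    ext P (⟨w, k⟩ | ⟨d, r, c⟩) <;> funext t
    · exact (app_inl α P w k t).symm
    · exact (app_inr α P d r c t).symm
  right_inv := fun (memQ, eqQ) =>
    Prod.ext (membershipQuery_ofQueries memQ eqQ) (equivalenceQuery_ofQueries memQ eqQ)

end DFATeacher

/-- Teachers in the generic sense (natural transformations `F ⟶ M_T`) for the
DFA learning game type correspond bijectively to pairs of a membership query
map `MQᵀ : T × List A → Bool × T` and an equivalence query map
`EQᵀ : T × 𝔻 → Option (List A × T)`. -/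
theorem dfa_teacher_characterization (A T : Type) :
    Nonempty
      ((FDFA A ⟶ MGame T) ≃
        ((T × List A → Bool × T) × (T × DFAs A → Option (List A × T)))) :=
  ⟨DFATeacher.equivQueries⟩
end
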